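/- arXiv:1502.05813 — 6 statements merged into one kernel-verified Lean document; each statement's English description precedes it below -/
import Mathlib

section
/- Let n ≥ 5 and let λ be the Lie multiplication n₅,₁⊕𝔞ₙ₋₅ on ℂⁿ. Then Der(λ) has dimension n² − 5n + 15, there exists an abelian ideal of λ of dimension n − 2, and every abelian ideal of λ has dimension at most n − 2. -/
noncomputable section

abbrev V (n : ℕ) : Type := Fin n → ℂ

abbrev Bil (n : ℕ) : Type := V n →ₗ[ℂ] V n →ₗ[ℂ] V n

instance BilTop (n : ℕ) : TopologicalSpace (Bil n) :=
  TopologicalSpace.induced (fun μ : Bil n => fun x y : V n => μ x y) inferInstance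

/-- The change-of-basis action of a linear automorphism on multiplications. -/
def act {n : ℕ} (g : V n ≃ₗ[ℂ] V n) (μ : Bil n) : Bil n :=
  LinearMap.mk₂ ℂ (fun x y => g (μ (g.symm x) (g.symm y)))
    (fun x x' y => by simp)
    (fun c x y => by simp)
    (fun x y y' => by simp)
    (fun c x y => by simp)

/-- The orbit of a multiplication under the change-of-basis action. -/
def orb {n : ℕ} (μ : Bil n) : Set (Bil n) :=
  Set.range fun g : V n ≃ₗ[ℂ] V n => act g μ

/-- Two multiplications are isomorphic iff they lie in the same orbit. -/
def Isom {n : ℕ} (μ ν : Bil n) : Prop := ∃ g : V n ≃ₗ[ℂ] V n, act g μ = ν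

def levelOne {n : ℕ} (lam : Bil n) : Prop :=
  lam ≠ 0 ∧ closure (orb lam) ⊆ orb lam ∪ {0}

def levelTwo {n : ℕ} (lam : Bil n) : Prop :=
  (∀ μ ∈ closure (orb lam) \ orb lam, closure (orb μ) ⊆ orb μ ∪ {0}) ∧
  ∃ μ ∈ closure (orb lam) \ orb lam, μ ≠ 0

/-- `E n k` is the standard basis vector `e_{k+1}` of `ℂⁿ` (0-indexed `k`). -/
def E (n k : ℕ) : V n := fun m => if (m : ℕ) = k then 1 else 0

/-- The bilinear multiplication determined by a table of products of basis vectors. -/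
def ofTable {n : ℕ} (c : Fin n → Fin n → V n) : Bil n :=
  LinearMap.mk₂ ℂ (fun x y => ∑ i : Fin n, ∑ j : Fin n, (x i * y j) • c i j)
    (fun x x' y => by
      simp [add_mul, add_smul, Finset.sum_add_distrib])
    (fun a x y => by
      simp [Finset.smul_sum, smul_smul, mul_assoc])
    (fun x y y' => by
      simp [mul_add, add_smul, Finset.sum_add_distrib])
    (fun a x y => by
      simp [Finset.smul_sum, smul_smul, mul_assoc, mul_left_comm])

def JordanMul {n : ℕ} (lam : Bil n) : Prop :=
  (∀ x y : V n, lam x y = lam y x) ∧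
  ∀ x y : V n, lam (lam x x) (lam y x) = lam (lam (lam x x) y) x

def LieMul {n : ℕ} (lam : Bil n) : Prop :=
  (∀ x : V n, lam x x = 0) ∧
  ∀ x y z : V n, lam x (lam y z) + lam y (lam z x) + lam z (lam x y) = 0

def AssocMul {n : ℕ} (lam : Bil n) : Prop :=
  ∀ x y z : V n, lam (lam x y) z = lam x (lam y z)
/-- The space of derivations of a multiplication. -/
def Der {n : ℕ} (lam : Bil n) : Submodule ℂ (Module.End ℂ (V n)) where
  carrier := { D | ∀ x y : V n, D (lam x y) = lam (D x) y + lam x (D y) }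
  add_mem' := by
    intro a b ha hb x y
    simp only [LinearMap.add_apply, ha x y, hb x y, map_add, LinearMap.add_apply]
    abel
  zero_mem' := by intro x y; simp
  smul_mem' := by
    intro c a ha x y
    simp only [LinearMap.smul_apply, ha x y, map_smul, smul_add, LinearMap.smul_apply]

/-- `I` is an abelian ideal of the (Lie) multiplication `lam`. -/
def IsAbelianIdeal {n : ℕ} (lam : Bil n) (I : Submodule ℂ (V n)) : Prop :=
  (∀ x : V n, ∀ v ∈ I, lam x v ∈ I) ∧ ∀ v ∈ I, ∀ w ∈ I, lam v w = 0
/-- `n₅,₁ ⊕ 𝔞_{n-5}`: `[e₁,e₃] = e₅`, `[e₂,e₄] = e₅`. -/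
def n51 (n : ℕ) : Bil n :=
  ofTable fun i j =>
    if i.val = 0 ∧ j.val = 2 then E n 4
    else if i.val = 2 ∧ j.val = 0 then -E n 4
    else if i.val = 1 ∧ j.val = 3 then E n 4
    else if i.val = 3 ∧ j.val = 1 then -E n 4
    else 0

/-- `n₅,₂ ⊕ 𝔞_{n-5}`: `[e₁,e₂] = e₄`, `[e₁,e₃] = e₅`. -/
def n52 (n : ℕ) : Bil n :=
  ofTable fun i j =>
    if i.val = 0 ∧ j.val = 1 then E n 3
    else if i.val = 1 ∧ j.val = 0 then -E n 3
    else if i.val = 0 ∧ j.val = 2 then E n 4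
    else if i.val = 2 ∧ j.val = 0 then -E n 4
    else 0

/-- `r₂ ⊕ 𝔞_{n-2}`: `[e₁,e₂] = e₂`. -/
def r2 (n : ℕ) : Bil n :=
  ofTable fun i j =>
    if i.val = 0 ∧ j.val = 1 then E n 1
    else if i.val = 1 ∧ j.val = 0 then -E n 1
    else 0

/-- `g_{n,1}(α)`: `[e₁,e₂] = α e₂`, `[e₁,eᵢ] = eᵢ` for `3 ≤ i ≤ n`. -/
def g1 (n : ℕ) (α : ℂ) : Bil n :=
  ofTable fun i j =>
    if i.val = 0 ∧ j.val = 1 then α • E n 1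
    else if i.val = 1 ∧ j.val = 0 then -(α • E n 1)
    else if i.val = 0 ∧ 2 ≤ j.val then E n j.val
    else if j.val = 0 ∧ 2 ≤ i.val then -E n i.val
    else 0

/-- `g_{n,2}`: `[e₁,e₂] = e₂ + e₃`, `[e₁,eᵢ] = eᵢ` for `3 ≤ i ≤ n`. -/
def g2 (n : ℕ) : Bil n :=
  ofTable fun i j =>
    if i.val = 0 ∧ j.val = 1 then E n 1 + E n 2
    else if i.val = 1 ∧ j.val = 0 then -(E n 1 + E n 2)
    else if i.val = 0 ∧ 2 ≤ j.val then E n j.val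
    else if j.val = 0 ∧ 2 ≤ i.val then -E n i.val
    else 0

/-!
Write `[x, y] = ω(x, y) e₅` with `ω = e₁* ∧ e₃* + e₂* ∧ e₄*`, an alternating form whose radical is
`span (e₅, …, eₙ)`. An abelian ideal is `ω`-isotropic, so its dimension is at most
`(n + dim rad ω) / 2 = n - 2`, and `span (e₃, …, eₙ)` is such an ideal. A matrix is a derivation
iff it maps `e₅` into `ℂ e₅`, preserves `rad ω`, and its upper-left `4 × 4` block is conformally
symplectic for `ω` with factor `M₅₅`: these are `5n - 15` linear conditions, each containing an
entry that occurs in no other one, so they are independent.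
-/

open Module LinearMap Matrix

theorem LinearMap.BilinForm.two_mul_finrank_le_of_le_orthogonal {K W : Type*} [Field K]
    [AddCommGroup W] [Module K W] [FiniteDimensional K W] {B : LinearMap.BilinForm K W}
    (hB : B.IsRefl) {I : Submodule K W} (hI : I ≤ B.orthogonal I) :
    2 * finrank K I ≤ finrank K W + finrank K (B.orthogonal ⊤) := by
  have := B.finrank_add_finrank_orthogonal hB I
  have := Submodule.finrank_mono hI
  have := Submodule.finrank_mono (inf_le_right : I ⊓ B.orthogonal ⊤ ≤ B.orthogonal ⊤)
  omega

theorem LinearMap.finrank_ker_funLeft_of_injective (K : Type*) [Field K] {ι κ : Type*}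
    [Fintype ι] [Fintype κ] {f : κ → ι} (hf : Function.Injective f) :
    finrank K (ker (funLeft K K f)) = Fintype.card ι - Fintype.card κ := by
  have := finrank_range_add_finrank_ker (funLeft K K f)
  rw [range_eq_top.mpr (funLeft_surjective_of_injective K K f hf), finrank_top] at this
  simp only [finrank_fintype_fun_eq_card] at this
  omega

theorem LinearMap.finrank_ker_add_card_of_apply_eq_single {K W κ : Type*} [Field K]
    [AddCommGroup W] [Module K W] [FiniteDimensional K W] [Fintype κ] [DecidableEq κ]
    (Θ : W →ₗ[K] κ → K) (s : κ → W) (hs : ∀ k, Θ (s k) = Pi.single k 1) :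
    finrank K (ker Θ) + Fintype.card κ = finrank K W := by
  have hsurj : Function.Surjective Θ := fun t =>
    ⟨∑ k, t k • s k, by ext; simp [hs, Finset.sum_apply, Pi.single_apply]⟩
  have := finrank_range_add_finrank_ker Θ
  rw [range_eq_top.mpr hsurj, finrank_top, finrank_fintype_fun_eq_card] at this
  omega

theorem Matrix.mulVec_apply_eq_sum_of_eq_zero {ι R : Type*} [Fintype ι] [CommSemiring R]
    (M : Matrix ι ι R) (x : ι → R) {a : ι} (S : Finset ι) (h : ∀ b ∉ S, M a b = 0) :
    (M *ᵥ x) a = ∑ b ∈ S, M a b * x b :=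
  (Finset.sum_subset (Finset.subset_univ S) fun b _ hb => by simp [h b hb]).symm

-- Lets `simp` evaluate the numerals `0, …, 4 : Fin (m + 5)`; below, `Fin.ext_iff` is used
-- together with `-Fin.val_eq_zero_iff`, since the two rewrite into each other.
@[simp] theorem mod_add_eq_self_of_lt {k m n : ℕ} (hk : k < n) : k % (m + n) = k :=
  Nat.mod_eq_of_lt (by omega)

theorem E_eq_single {n : ℕ} (k : Fin n) : E n k = Pi.single k 1 := by
  ext a
  simp [E, Pi.single_apply, Fin.ext_iff]

theorem ofTable_single {n : ℕ} (c : Fin n → Fin n → V n) (i j : Fin n) :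
    ofTable c (Pi.single i 1) (Pi.single j 1) = c i j := by
  simp [ofTable, Pi.single_apply]

variable {m : ℕ}

def n51Form (m : ℕ) : LinearMap.BilinForm ℂ (V (m + 5)) :=
  LinearMap.mk₂ ℂ (fun x y => x 0 * y 2 - x 2 * y 0 + x 1 * y 3 - x 3 * y 1)
    (fun _ _ _ => by simp only [Pi.add_apply]; ring)
    (fun _ _ _ => by simp only [Pi.smul_apply, smul_eq_mul]; ring)
    (fun _ _ _ => by simp only [Pi.add_apply]; ring)
    (fun _ _ _ => by simp only [Pi.smul_apply, smul_eq_mul]; ring)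

theorem n51Form_apply (x y : V (m + 5)) :
    n51Form m x y = x 0 * y 2 - x 2 * y 0 + x 1 * y 3 - x 3 * y 1 := rfl

theorem n51Form_isAlt : (n51Form m).IsAlt := fun x => by rw [n51Form_apply]; ring

theorem n51_apply (x y : V (m + 5)) : n51 (m + 5) x y = n51Form m x y • Pi.single 4 1 := by
  change n51 (m + 5) x y = ((n51Form m).compr₂ (toSpanSingleton ℂ _ (Pi.single 4 1))) x y
  congr 2
  refine ext_basis (Pi.basisFun ℂ _) (Pi.basisFun ℂ _) fun i j => ?_
  have hE : E (m + 5) 4 = Pi.single 4 1 := by simpa using E_eq_single (4 : Fin (m + 5))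
  simp only [Pi.basisFun_apply, n51, ofTable_single, compr₂_apply, toSpanSingleton_apply,
    n51Form_apply, Pi.single_apply, hE, Fin.ext_iff, Fin.coe_ofNat_eq_mod, mod_add_eq_self_of_lt,
    Nat.reduceLT]
  have hsplit (a : ℕ) : a = 0 ∨ a = 1 ∨ a = 2 ∨ a = 3 ∨ (a ≠ 0 ∧ a ≠ 1 ∧ a ≠ 2 ∧ a ≠ 3) := by
    omega
  rcases hsplit i with hi | hi | hi | hi | hi <;> rcases hsplit j with hj | hj | hj | hj | hj <;>
    simp [hi, hj, eq_comm (b := (i : ℕ)), eq_comm (b := (j : ℕ))]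

theorem n51_eq_zero_iff (x y : V (m + 5)) : n51 (m + 5) x y = 0 ↔ n51Form m x y = 0 := by
  simp [n51_apply]

theorem le_orthogonal_of_isAbelianIdeal {I : Submodule ℂ (V (m + 5))}
    (hI : IsAbelianIdeal (n51 (m + 5)) I) : I ≤ (n51Form m).orthogonal I :=
  fun v hv w hw => (n51_eq_zero_iff w v).mp (hI.2 w hw v hv)

theorem n51Form_orthogonal_top_le :
    (n51Form m).orthogonal ⊤ ≤ ker (funLeft ℂ ℂ ![(0 : Fin (m + 5)), 1, 2, 3]) := by
  intro x hx
  have h (i : Fin (m + 5)) : n51Form m (Pi.single i 1) x = 0 := hx _ Submodule.mem_top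
  ext a
  fin_cases a
  · simpa [n51Form_apply, Pi.single_apply, Fin.ext_iff] using h 2
  · simpa [n51Form_apply, Pi.single_apply, Fin.ext_iff] using h 3
  · simpa [n51Form_apply, Pi.single_apply, Fin.ext_iff] using h 0
  · simpa [n51Form_apply, Pi.single_apply, Fin.ext_iff] using h 1

theorem finrank_le_of_isAbelianIdeal {I : Submodule ℂ (V (m + 5))}
    (hI : IsAbelianIdeal (n51 (m + 5)) I) : finrank ℂ I ≤ m + 5 - 2 := by
  have hinj : Function.Injective ![(0 : Fin (m + 5)), 1, 2, 3] := by
    intro a b h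
    fin_cases a <;> fin_cases b <;> simp_all [Fin.ext_iff]
  have hI := BilinForm.two_mul_finrank_le_of_le_orthogonal n51Form_isAlt.isRefl
    (le_orthogonal_of_isAbelianIdeal hI)
  have hrad := (Submodule.finrank_mono (n51Form_orthogonal_top_le (m := m))).trans_eq
    (finrank_ker_funLeft_of_injective ℂ hinj)
  simp only [finrank_fin_fun, Fintype.card_fin] at hI hrad
  omega

theorem isAbelianIdeal_ker_funLeft_zero_one :
    IsAbelianIdeal (n51 (m + 5)) (ker (funLeft ℂ ℂ ![(0 : Fin (m + 5)), 1])) := by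
  refine ⟨fun x v _ => ?_, fun v hv w hw => ?_⟩
  · ext a
    fin_cases a <;> simp [n51_apply, Fin.ext_iff]
  · have hv (a : Fin 2) := congrFun hv a
    have hw (a : Fin 2) := congrFun hw a
    simp at hv hw
    simp [n51_eq_zero_iff, n51Form_apply, hv, hw]

theorem exists_isAbelianIdeal_finrank_eq :
    ∃ I : Submodule ℂ (V (m + 5)), IsAbelianIdeal (n51 (m + 5)) I ∧ finrank ℂ I = m + 5 - 2 := by
  refine ⟨_, isAbelianIdeal_ker_funLeft_zero_one, ?_⟩
  have hinj : Function.Injective ![(0 : Fin (m + 5)), 1] := by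
    intro a b h
    fin_cases a <;> fin_cases b <;> simp_all
  simpa using finrank_ker_funLeft_of_injective ℂ hinj

abbrev DerIndex (m : ℕ) : Type := {a : Fin (m + 5) // a ≠ 4} ⊕ Fin 4 × Fin m ⊕ Fin 6

-- The derivations of `n51 (m + 5)` are the common kernel of these functionals on matrices: column
-- `4` lies in `ℂ e₅`, rows `0, …, 3` vanish on `rad ω`, and the `4 × 4` block is conformally
-- symplectic with factor `M 4 4`.
def derCondition : DerIndex m → Matrix (Fin (m + 5)) (Fin (m + 5)) ℂ →ₗ[ℂ] ℂ
  | .inl a => entryLinearMap ℂ ℂ a.1 4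
  | .inr (.inl (a, c)) => entryLinearMap ℂ ℂ (![0, 1, 2, 3] a) (c.addNat 5)
  | .inr (.inr k) =>
    ![entryLinearMap ℂ ℂ 2 1 - entryLinearMap ℂ ℂ 3 0,
      entryLinearMap ℂ ℂ 2 3 + entryLinearMap ℂ ℂ 1 0,
      entryLinearMap ℂ ℂ 3 2 + entryLinearMap ℂ ℂ 0 1,
      entryLinearMap ℂ ℂ 0 3 - entryLinearMap ℂ ℂ 1 2,
      entryLinearMap ℂ ℂ 0 0 + entryLinearMap ℂ ℂ 2 2 - entryLinearMap ℂ ℂ 4 4,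
      entryLinearMap ℂ ℂ 1 1 + entryLinearMap ℂ ℂ 3 3 - entryLinearMap ℂ ℂ 4 4] k

-- An entry that occurs with coefficient `1` in the condition `k` and in no other condition.
def derPivot : DerIndex m → Fin (m + 5) × Fin (m + 5)
  | .inl a => (a.1, 4)
  | .inr (.inl (a, c)) => (![0, 1, 2, 3] a, c.addNat 5)
  | .inr (.inr k) => ![(2, 1), (2, 3), (3, 2), (0, 3), (2, 2), (3, 3)] k

theorem pi_derCondition_single_derPivot (k : DerIndex m) :
    LinearMap.pi derCondition (Matrix.single (derPivot k).1 (derPivot k).2 1) = Pi.single k 1 := by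
  ext k'
  rw [Pi.single_comm]
  rcases k with ⟨r, hr⟩ | ⟨a, c⟩ | k <;> rcases k' with ⟨r', hr'⟩ | ⟨a', c'⟩ | k' <;>
    (try fin_cases a) <;> (try fin_cases a') <;> (try fin_cases k) <;> (try fin_cases k') <;>
    simp [derCondition, derPivot, Matrix.single_apply, Pi.single_apply, Fin.ext_iff,
      -Fin.val_eq_zero_iff, *]

theorem toLin'_mem_der_n51_iff (M : Matrix (Fin (m + 5)) (Fin (m + 5)) ℂ) :
    toLin' M ∈ Der (n51 (m + 5)) ↔ ∀ x y, n51Form m x y • M.col 4 =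
      (n51Form m (M *ᵥ x) y + n51Form m x (M *ᵥ y)) • Pi.single 4 1 := by
  change (∀ x y, _) ↔ _
  simp [n51_apply, toLin'_apply, add_smul]

theorem derCondition_eq_zero_of_mem_der {M : Matrix (Fin (m + 5)) (Fin (m + 5)) ℂ}
    (hM : toLin' M ∈ Der (n51 (m + 5))) (k : DerIndex m) : derCondition k M = 0 := by
  have key (i j a : Fin (m + 5)) := congrFun ((toLin'_mem_der_n51_iff M).mp hM
    (Pi.single i 1) (Pi.single j 1)) a
  simp only [Pi.smul_apply, smul_eq_mul, mulVec_single_one, n51Form_apply] at key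
  rcases k with ⟨r, hr⟩ | ⟨a, c⟩ | k
  · have h := key 0 2 r
    simp [Fin.ext_iff, -Fin.val_eq_zero_iff, hr] at h
    simpa [derCondition] using h
  · have h0 := key (c.addNat 5) 2 4
    have h1 := key (c.addNat 5) 3 4
    have h2 := key (c.addNat 5) 0 4
    have h3 := key (c.addNat 5) 1 4
    simp [Fin.ext_iff, -Fin.val_eq_zero_iff] at h0 h1 h2 h3
    fin_cases a <;> simp [derCondition]
    · linear_combination -h0
    · linear_combination -h1
    · linear_combination h2
    · linear_combination h3
  · have h01 := key 0 1 4
    have h03 := key 0 3 4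
    have h12 := key 1 2 4
    have h23 := key 2 3 4
    have h02 := key 0 2 4
    have h13 := key 1 3 4
    simp [Fin.ext_iff, -Fin.val_eq_zero_iff] at h01 h03 h12 h23 h02 h13
    fin_cases k <;> simp [derCondition]
    · linear_combination -h01
    · linear_combination -h03
    · linear_combination -h12
    · linear_combination h23
    · linear_combination -h02
    · linear_combination -h13

theorem mulVec_apply_of_derCondition_eq_zero {M : Matrix (Fin (m + 5)) (Fin (m + 5)) ℂ}
    (hM : ∀ k, derCondition k M = 0) (x : V (m + 5)) {a : Fin (m + 5)}
    (ha : a ∈ ({0, 1, 2, 3} : Finset (Fin (m + 5)))) :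
    (M *ᵥ x) a = M a 0 * x 0 + M a 1 * x 1 + M a 2 * x 2 + M a 3 * x 3 := by
  obtain ⟨a, rfl⟩ : ∃ a' : Fin 4, ![0, 1, 2, 3] a' = a := by
    simp only [Finset.mem_insert, Finset.mem_singleton] at ha
    rcases ha with rfl | rfl | rfl | rfl
    exacts [⟨0, rfl⟩, ⟨1, rfl⟩, ⟨2, rfl⟩, ⟨3, rfl⟩]
  rw [mulVec_apply_eq_sum_of_eq_zero M x {0, 1, 2, 3} fun b hb => ?_]
  · simp [Finset.sum_insert, Fin.ext_iff, -Fin.val_eq_zero_iff, add_assoc]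
  by_cases hb4 : b = 4
  · have ha4 : ![0, 1, 2, 3] a ≠ (4 : Fin (m + 5)) := by
      fin_cases a <;> simp [Fin.ext_iff]
    simpa [derCondition, hb4] using hM (.inl ⟨_, ha4⟩)
  · have hb5 : 5 ≤ (b : ℕ) := by
      simp [Fin.ext_iff, -Fin.val_eq_zero_iff] at hb hb4
      omega
    have hb : b = Fin.addNat ⟨b - 5, by omega⟩ 5 := by ext; simp; omega
    simpa [derCondition, ← hb] using hM (.inr (.inl (a, ⟨b - 5, by omega⟩)))

theorem mem_der_of_derCondition_eq_zero {M : Matrix (Fin (m + 5)) (Fin (m + 5)) ℂ}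
    (hM : ∀ k, derCondition k M = 0) : toLin' M ∈ Der (n51 (m + 5)) := by
  have hcol : M.col 4 = M 4 4 • Pi.single 4 1 := by
    ext a
    by_cases ha : a = 4
    · simp [ha]
    · simpa [Pi.single_apply, ha, derCondition] using hM (.inl ⟨a, ha⟩)
  have h (k : Fin 6) := hM (.inr (.inr k))
  have h0 := h 0
  have h1 := h 1
  have h2 := h 2
  have h3 := h 3
  have h4 := h 4
  have h5 := h 5
  simp [derCondition] at h0 h1 h2 h3 h4 h5
  rw [toLin'_mem_der_n51_iff]
  intro x y
  rw [hcol, smul_smul, ← sub_eq_zero, ← sub_smul, smul_eq_zero]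
  left
  simp (disch := simp) only [n51Form_apply, mulVec_apply_of_derCondition_eq_zero hM]
  linear_combination
    (x 1 * y 0 - x 0 * y 1) * h0 + (x 3 * y 0 - x 0 * y 3) * h1 +
    (x 2 * y 1 - x 1 * y 2) * h2 + (x 2 * y 3 - x 3 * y 2) * h3 +
    (x 2 * y 0 - x 0 * y 2) * h4 + (x 3 * y 1 - x 1 * y 3) * h5

theorem der_n51_eq_map_ker :
    Der (n51 (m + 5)) = (ker (LinearMap.pi (derCondition (m := m)))).map
      (toLin' : Matrix _ _ ℂ ≃ₗ[ℂ] _).toLinearMap := by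
  ext D
  rw [Submodule.mem_map_equiv, mem_ker, funext_iff]
  refine ⟨fun hD => derCondition_eq_zero_of_mem_der ?_, fun hM => ?_⟩
  · simpa using hD
  · simpa using mem_der_of_derCondition_eq_zero hM

theorem finrank_der_n51 : finrank ℂ (Der (n51 (m + 5))) = (m + 5) ^ 2 - 5 * (m + 5) + 15 := by
  have hcount := finrank_ker_add_card_of_apply_eq_single _ _
    (pi_derCondition_single_derPivot (m := m))
  simp [finrank_matrix, Fintype.card_subtype_compl] at hcount
  rw [der_n51_eq_map_ker, LinearEquiv.finrank_map_eq, sq]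
  have : (m + 5) * (m + 5) = m * m + 10 * m + 25 := by ring
  omega

/-- derivations and maximal abelian ideal of n51. -/
theorem der_ab_n51 (n : ℕ) (hn : 5 ≤ n)  :
    Module.finrank ℂ (Der (n51 n)) = n ^ 2 - 5 * n + 15 ∧
    (∃ I : Submodule ℂ (V n), IsAbelianIdeal (n51 n) I ∧ Module.finrank ℂ I = n - 2) ∧
    (∀ I : Submodule ℂ (V n), IsAbelianIdeal (n51 n) I → Module.finrank ℂ I ≤ n - 2) := by
  obtain ⟨m, rfl⟩ := Nat.exists_eq_add_of_le' hn
  exact ⟨finrank_der_n51, exists_isAbelianIdeal_finrank_eq,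
    fun _ hI => finrank_le_of_isAbelianIdeal hI⟩
end
end

section
/- Let n ≥ 5 and let λ be the Lie multiplication n₅,₂⊕𝔞ₙ₋₅ on ℂⁿ. Then Der(λ) has dimension n² − 5n + 13, there exists an abelian ideal of λ of dimension n − 1, and every abelian ideal of λ has dimension at most n − 1. -/
noncomputable section

set_option maxHeartbeats 1000000 in
lemma n52_formula (n : ℕ) (hn : 5 ≤ n) (x y : V n) :
    n52 n x y = (x ⟨0, by omega⟩ * y ⟨1, by omega⟩ - x ⟨1, by omega⟩ * y ⟨0, by omega⟩) • E n 3
      + (x ⟨0, by omega⟩ * y ⟨2, by omega⟩ - x ⟨2, by omega⟩ * y ⟨0, by omega⟩) • E n 4 := by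
  have h0 : ∀ i : Fin n, i.val = 0 ↔ i = ⟨0, by omega⟩ := fun i => ⟨fun h => Fin.ext h, fun h => by subst h; rfl⟩
  have h1 : ∀ i : Fin n, i.val = 1 ↔ i = ⟨1, by omega⟩ := fun i => ⟨fun h => Fin.ext h, fun h => by subst h; rfl⟩
  have h2 : ∀ i : Fin n, i.val = 2 ↔ i = ⟨2, by omega⟩ := fun i => ⟨fun h => Fin.ext h, fun h => by subst h; rfl⟩
  set z0 : Fin n := ⟨0, by omega⟩
  set z1 : Fin n := ⟨1, by omega⟩
  set z2 : Fin n := ⟨2, by omega⟩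
  show (∑ i : Fin n, ∑ j : Fin n, (x i * y j) • _) = _
  simp only [n52, ofTable, LinearMap.mk₂_apply, h0, h1, h2]
  have key : ∀ i j : Fin n, ((x i * y j) •
      if i = z0 ∧ j = z1 then E n 3
      else if i = z1 ∧ j = z0 then -E n 3
      else if i = z0 ∧ j = z2 then E n 4
      else if i = z2 ∧ j = z0 then -E n 4 else 0) =
      (if j = z1 then if i = z0 then (x i * y j) • E n 3 else 0 else 0)
      + (if j = z0 then if i = z1 then -((x i * y j) • E n 3) else 0 else 0)
      + (if j = z2 then if i = z0 then (x i * y j) • E n 4 else 0 else 0)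
      + (if j = z0 then if i = z2 then -((x i * y j) • E n 4) else 0 else 0) := by
    intro i j
    have e01 : z0 ≠ z1 := by simp [z0, z1, Fin.ext_iff]
    have e02 : z0 ≠ z2 := by simp [z0, z2, Fin.ext_iff]
    have e12 : z1 ≠ z2 := by simp [z1, z2, Fin.ext_iff]
    by_cases hi0 : i = z0 <;> by_cases hi1 : i = z1 <;> by_cases hi2 : i = z2 <;>
      by_cases hj0 : j = z0 <;> by_cases hj1 : j = z1 <;> by_cases hj2 : j = z2 <;>
      simp_all <;> module
  simp only [key, Finset.sum_add_distrib, Finset.sum_ite_eq', Finset.mem_univ, if_true]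
  module
section DerAbN52
variable {n : ℕ}

lemma E_single (k : ℕ) (hk : k < n) : E n k = Pi.single (⟨k, hk⟩ : Fin n) 1 := by
  ext m; simp [E, Pi.single_apply, Fin.ext_iff, eq_comm]

lemma single_E (i : Fin n) : (Pi.single i 1 : V n) = E n i.val := by
  ext m; simp [E, Pi.single_apply, Fin.ext_iff, eq_comm]

lemma expand (D : Module.End ℂ (V n)) (x : V n) :
    D x = ∑ i : Fin n, x i • D (Pi.single i 1) := by
  have hx : x = ∑ i : Fin n, x i • (Pi.single i 1 : V n) := by
    ext k
    simp [Finset.sum_apply, Pi.single_apply]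
  conv_lhs => rw [hx]
  simp [map_sum]

lemma abelian_ideal_exists (hn : 5 ≤ n) :
    ∃ I : Submodule ℂ (V n), IsAbelianIdeal (n52 n) I ∧ Module.finrank ℂ I = n - 1 := by
  set z0 : Fin n := ⟨0, by omega⟩
  set p : V n →ₗ[ℂ] ℂ := LinearMap.proj z0
  refine ⟨LinearMap.ker p, ⟨?_, ?_⟩, ?_⟩
  · intro x v _
    rw [LinearMap.mem_ker]
    rw [n52_formula n hn]
    simp [p, E, z0]
  · intro v hv w hw
    rw [LinearMap.mem_ker] at hv hw
    rw [n52_formula n hn]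
    simp only [p, LinearMap.proj_apply] at hv hw
    rw [show v z0 = 0 from hv, show w z0 = 0 from hw]
    simp
  · have hsurj : Function.Surjective p := fun c => ⟨fun _ => c, rfl⟩
    have h1 := LinearMap.finrank_range_add_finrank_ker p
    rw [LinearMap.range_eq_top.mpr hsurj, finrank_top] at h1
    have h2 : Module.finrank ℂ (V n) = n := by
      simp [Module.finrank_fintype_fun_eq_card]
    have h3 : Module.finrank ℂ ℂ = 1 := Module.finrank_self ℂ
    omega

lemma abelian_ideal_le (hn : 5 ≤ n) (I : Submodule ℂ (V n))
    (hI : IsAbelianIdeal (n52 n) I) : Module.finrank ℂ I ≤ n - 1 := by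
  have h2 : Module.finrank ℂ (V n) = n := by
    simp [Module.finrank_fintype_fun_eq_card]
  by_contra h
  have hle : Module.finrank ℂ I ≤ n := by have := Submodule.finrank_le I; omega
  have heq : Module.finrank ℂ I = Module.finrank ℂ (V n) := by omega
  have htop : I = ⊤ := Submodule.eq_top_of_finrank_eq heq
  have h01 := hI.2 (E n 0) (htop ▸ Submodule.mem_top) (E n 1) (htop ▸ Submodule.mem_top)
  rw [n52_formula n hn] at h01
  have := congrFun h01 ⟨3, by omega⟩
  simp [E] at this

end DerAbN52
section DerChar
variable {n : ℕ}

def derC (hn : 5 ≤ n) (D : Module.End ℂ (V n)) : Prop :=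
  D (E n 1) ⟨0, by omega⟩ = 0 ∧
  D (E n 2) ⟨0, by omega⟩ = 0 ∧
  (∀ j : Fin n, 5 ≤ j.val → ∀ k : Fin n, k.val < 3 → D (Pi.single j 1) k = 0) ∧
  D (E n 3) = (D (E n 0) ⟨0, by omega⟩ + D (E n 1) ⟨1, by omega⟩) • E n 3
      + (D (E n 1) ⟨2, by omega⟩) • E n 4 ∧
  D (E n 4) = (D (E n 2) ⟨1, by omega⟩) • E n 3
      + (D (E n 0) ⟨0, by omega⟩ + D (E n 2) ⟨2, by omega⟩) • E n 4

lemma derC_row (hn : 5 ≤ n) (D : Module.End ℂ (V n)) (hC : derC hn D)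
    (r : ℕ) (hr3 : r < 3) (hrn : r < n) (x : V n) :
    D x ⟨r, hrn⟩ = x ⟨0, by omega⟩ * D (E n 0) ⟨r, hrn⟩
      + x ⟨1, by omega⟩ * D (E n 1) ⟨r, hrn⟩
      + x ⟨2, by omega⟩ * D (E n 2) ⟨r, hrn⟩ := by
  obtain ⟨h1, h2, h3, h4, h5⟩ := hC
  have key : ∀ i : Fin n, x i * D (Pi.single i 1) ⟨r, hrn⟩ =
      (if i = (⟨0, by omega⟩ : Fin n) then x i * D (E n 0) ⟨r, hrn⟩ else 0)
      + (if i = (⟨1, by omega⟩ : Fin n) then x i * D (E n 1) ⟨r, hrn⟩ else 0)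
      + (if i = (⟨2, by omega⟩ : Fin n) then x i * D (E n 2) ⟨r, hrn⟩ else 0) := by
    intro i
    rcases (show i.val = 0 ∨ i.val = 1 ∨ i.val = 2 ∨ i.val = 3 ∨ i.val = 4 ∨ 5 ≤ i.val
      by omega) with h|h|h|h|h|h
    · have hi : i = ⟨0, by omega⟩ := Fin.ext h
      rw [hi]
      rw [single_E]
      simp [Fin.ext_iff]
    · have hi : i = ⟨1, by omega⟩ := Fin.ext h
      rw [hi]
      rw [single_E]
      simp [Fin.ext_iff]
    · have hi : i = ⟨2, by omega⟩ := Fin.ext h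
      rw [hi]
      rw [single_E]
      simp [Fin.ext_iff]
    · have hi : i = ⟨3, by omega⟩ := Fin.ext h
      rw [hi]
      rw [single_E]
      show x _ * D (E n 3) _ = _
      rw [h4]
      simp [Fin.ext_iff, E, show r ≠ 3 by omega, show r ≠ 4 by omega]
    · have hi : i = ⟨4, by omega⟩ := Fin.ext h
      rw [hi]
      rw [single_E]
      show x _ * D (E n 4) _ = _
      rw [h5]
      simp [Fin.ext_iff, E, show r ≠ 3 by omega, show r ≠ 4 by omega]
    · rw [h3 i h ⟨r, hrn⟩ hr3]
      simp [Fin.ext_iff, show ¬ i.val = 0 by omega, show ¬ i.val = 1 by omega,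
        show ¬ i.val = 2 by omega]
  calc D x ⟨r, hrn⟩ = ∑ i : Fin n, x i * D (Pi.single i 1) ⟨r, hrn⟩ := by
        rw [expand D x]; simp [Finset.sum_apply]
    _ = _ := by
        simp only [key, Finset.sum_add_distrib, Finset.sum_ite_eq', Finset.mem_univ, if_true]

end DerChar
section DerIff
variable {n : ℕ}

lemma mem_der_iff (hn : 5 ≤ n) (D : Module.End ℂ (V n)) :
    D ∈ Der (n52 n) ↔ derC hn D := by
  constructor
  · intro h
    have h' : ∀ x y : V n, D (n52 n x y) = n52 n (D x) y + n52 n x (D y) := h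
    refine ⟨?_, ?_, ?_, ?_, ?_⟩
    · have h12 := h' (E n 1) (E n 2)
      simp only [n52_formula n hn] at h12
      simp [E] at h12
      have := congrFun h12 ⟨4, by omega⟩
      simp [E] at this
      exact this.symm
    · have h12 := h' (E n 1) (E n 2)
      simp only [n52_formula n hn] at h12
      simp [E] at h12
      have := congrFun h12 ⟨3, by omega⟩
      simp [E] at this
      exact this
    · intro j hj k hk
      have hsz : ∀ m : Fin n, m.val < 3 → (Pi.single j 1 : V n) m = 0 := by
        intro m hm
        rw [Pi.single_apply, if_neg]
        intro e; rw [e] at hm; omega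
      have h0j := h' (E n 0) (Pi.single j 1)
      have h1j := h' (E n 1) (Pi.single j 1)
      simp only [n52_formula n hn] at h0j h1j
      simp [E, hsz ⟨0, by omega⟩ (by norm_num), hsz ⟨1, by omega⟩ (by norm_num),
        hsz ⟨2, by omega⟩ (by norm_num)] at h0j h1j
      have e3 := congrFun h0j ⟨3, by omega⟩
      have e4 := congrFun h0j ⟨4, by omega⟩
      simp [E] at e3 e4
      have e0 : D (Pi.single j 1) ⟨0, by omega⟩ = 0 := by
        refine h1j.resolve_right ?_
        intro hh
        have := congrFun hh ⟨3, by omega⟩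
        simp [E] at this
      rcases (show k.val = 0 ∨ k.val = 1 ∨ k.val = 2 by omega) with hk'|hk'|hk'
      · rw [show k = ⟨0, by omega⟩ from Fin.ext hk']; exact e0
      · rw [show k = ⟨1, by omega⟩ from Fin.ext hk']; exact e3.symm
      · rw [show k = ⟨2, by omega⟩ from Fin.ext hk']; exact e4.symm
    · have h01 := h' (E n 0) (E n 1)
      simp only [n52_formula n hn] at h01
      simp [E] at h01
      rw [h01]
      module
    · have h02 := h' (E n 0) (E n 2)
      simp only [n52_formula n hn] at h02
      simp [E] at h02
      rw [h02]
      module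
  · intro hC
    intro x y
    obtain ⟨h1, h2, h3, h4, h5⟩ := hC
    have r0x := derC_row hn D ⟨h1, h2, h3, h4, h5⟩ 0 (by norm_num) (by omega) x
    have r1x := derC_row hn D ⟨h1, h2, h3, h4, h5⟩ 1 (by norm_num) (by omega) x
    have r2x := derC_row hn D ⟨h1, h2, h3, h4, h5⟩ 2 (by norm_num) (by omega) x
    have r0y := derC_row hn D ⟨h1, h2, h3, h4, h5⟩ 0 (by norm_num) (by omega) y
    have r1y := derC_row hn D ⟨h1, h2, h3, h4, h5⟩ 1 (by norm_num) (by omega) y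
    have r2y := derC_row hn D ⟨h1, h2, h3, h4, h5⟩ 2 (by norm_num) (by omega) y
    show D (n52 n x y) = n52 n (D x) y + n52 n x (D y)
    rw [n52_formula n hn x y, n52_formula n hn (D x) y, n52_formula n hn x (D y),
      map_add, map_smul, map_smul, h4, h5, r0x, r1x, r2x, r0y, r1y, r2y, h1, h2]
    match_scalars <;> ring

end DerIff
section FinrankDer
variable {n : ℕ}

set_option maxHeartbeats 2000000 in
set_option synthInstance.maxHeartbeats 1000000 in
lemma finrank_der (hn : 5 ≤ n) :
    Module.finrank ℂ (Der (n52 n)) = n ^ 2 - 5 * n + 13 := by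
  classical
  let P : Type := (Fin n → ℂ) × (Fin (n-1) → ℂ) × (Fin (n-1) → ℂ) × (Fin (n-5) → Fin (n-3) → ℂ)
  let Φ : ↥(Der (n52 n)) →ₗ[ℂ] P :=
    { toFun := fun D => (fun k => D.1 (E n 0) k,
        fun i => D.1 (E n 1) ⟨i.val+1, by have := i.isLt; omega⟩,
        fun i => D.1 (E n 2) ⟨i.val+1, by have := i.isLt; omega⟩,
        fun j k => D.1 (Pi.single (⟨j.val+5, by have := j.isLt; omega⟩ : Fin n) 1)
          ⟨k.val+3, by have := k.isLt; omega⟩)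
      map_add' := fun D D' => rfl
      map_smul' := fun a D => rfl }
  have hker : ∀ D : ↥(Der (n52 n)), Φ D = 0 → D = 0 := by
    intro D hD
    have hu := congrArg (fun p => p.1) hD
    have hb := congrArg (fun p => p.2.1) hD
    have hc := congrArg (fun p => p.2.2.1) hD
    have hM := congrArg (fun p => p.2.2.2) hD
    obtain ⟨h1, h2, h3, h4, h5⟩ := (mem_der_iff hn D.1).mp D.2
    have hcol0 : D.1 (E n 0) = 0 := by
      ext k; exact congrFun hu k
    have hcol1 : D.1 (E n 1) = 0 := by
      ext k
      rcases (show k.val = 0 ∨ 1 ≤ k.val by omega) with hk | hk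
      · rw [show k = ⟨0, by omega⟩ from Fin.ext hk]; exact h1
      · have hthis' : D.1 (E n 1) ⟨k.val - 1 + 1, by have := k.isLt; omega⟩ = 0 :=
          congrFun hb ⟨k.val - 1, by have := k.isLt; omega⟩
        rw [show k = (⟨k.val - 1 + 1, by have := k.isLt; omega⟩ : Fin n) from
          Fin.ext (by simp; omega)]
        exact hthis'
    have hcol2 : D.1 (E n 2) = 0 := by
      ext k
      rcases (show k.val = 0 ∨ 1 ≤ k.val by omega) with hk | hk
      · rw [show k = ⟨0, by omega⟩ from Fin.ext hk]; exact h2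
      · have hthis' : D.1 (E n 2) ⟨k.val - 1 + 1, by have := k.isLt; omega⟩ = 0 :=
          congrFun hc ⟨k.val - 1, by have := k.isLt; omega⟩
        rw [show k = (⟨k.val - 1 + 1, by have := k.isLt; omega⟩ : Fin n) from
          Fin.ext (by simp; omega)]
        exact hthis'
    have hcol3 : D.1 (E n 3) = 0 := by
      rw [h4, hcol0, hcol1]; simp
    have hcol4 : D.1 (E n 4) = 0 := by
      rw [h5, hcol0, hcol2]; simp
    have hcols : ∀ i : Fin n, D.1 (Pi.single i 1) = 0 := by
      intro i
      rcases (show i.val = 0 ∨ i.val = 1 ∨ i.val = 2 ∨ i.val = 3 ∨ i.val = 4 ∨ 5 ≤ i.val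
        by omega) with h|h|h|h|h|h
      · rw [single_E, h]; exact hcol0
      · rw [single_E, h]; exact hcol1
      · rw [single_E, h]; exact hcol2
      · rw [single_E, h]; exact hcol3
      · rw [single_E, h]; exact hcol4
      · ext k
        rcases (show k.val < 3 ∨ 3 ≤ k.val by omega) with hk | hk
        · exact h3 i h k hk
        · have hthis' : D.1 (Pi.single (⟨i.val - 5 + 5, by have := i.isLt; omega⟩ : Fin n) 1)
              ⟨k.val - 3 + 3, by have := k.isLt; omega⟩ = 0 :=
            congrFun (congrFun hM ⟨i.val - 5, by have := i.isLt; omega⟩)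
              ⟨k.val - 3, by have := k.isLt; omega⟩
          rw [show i = (⟨i.val - 5 + 5, by have := i.isLt; omega⟩ : Fin n) from
            Fin.ext (by simp; omega)]
          rw [show k = (⟨k.val - 3 + 3, by have := k.isLt; omega⟩ : Fin n) from
            Fin.ext (by simp; omega)]
          exact hthis'
    have : D.1 = 0 := by
      apply LinearMap.ext
      intro x
      rw [expand D.1 x]
      simp [hcols]
    exact Subtype.ext this
  have hinj : Function.Injective Φ := by
    intro a b hab
    have h0 : a - b = 0 := hker (a - b) ((LinearMap.map_sub Φ a b).trans (sub_eq_zero.mpr hab))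
    exact sub_eq_zero.mp h0
  have hsurj : Function.Surjective Φ := by
    rintro ⟨u, b, c, M⟩
    set A : Matrix (Fin n) (Fin n) ℂ := fun k l =>
      if l.val = 0 then u k
      else if l.val = 1 then (if hk : k.val = 0 then 0 else b ⟨k.val - 1, by have := k.isLt; omega⟩)
      else if l.val = 2 then (if hk : k.val = 0 then 0 else c ⟨k.val - 1, by have := k.isLt; omega⟩)
      else if l.val = 3 then
        (if k.val = 3 then u ⟨0, by omega⟩ + b ⟨0, by omega⟩
         else if k.val = 4 then b ⟨1, by omega⟩ else 0)
      else if l.val = 4 then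
        (if k.val = 3 then c ⟨0, by omega⟩
         else if k.val = 4 then u ⟨0, by omega⟩ + c ⟨1, by omega⟩ else 0)
      else if hl : 5 ≤ l.val then
        (if hk : k.val < 3 then 0
         else M ⟨l.val - 5, by have := l.isLt; omega⟩ ⟨k.val - 3, by have := k.isLt; omega⟩)
      else 0
      with hA
    set D0 : Module.End ℂ (V n) := Matrix.toLin' A with hD0
    have hDE : ∀ l : Fin n, D0 (Pi.single l 1) = fun k => A k l := by
      intro l; ext k
      simp [hD0, Matrix.toLin'_apply]
    have hDE' : ∀ (l : ℕ) (hl : l < n), D0 (E n l) = fun k => A k ⟨l, hl⟩ := by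
      intro l hl; rw [E_single l hl]; exact hDE _
    have hmem : D0 ∈ Der (n52 n) := by
      rw [mem_der_iff hn]
      refine ⟨?_, ?_, ?_, ?_, ?_⟩
      · rw [hDE' 1 (by omega)]
        simp [hA]
      · rw [hDE' 2 (by omega)]
        simp [hA]
      · intro j hj k hk
        rw [hDE j]
        simp only [hA]
        rw [if_neg (by omega), if_neg (by omega), if_neg (by omega), if_neg (by omega),
          if_neg (by omega), dif_pos hj, dif_pos hk]
      · rw [hDE' 3 (by omega), hDE' 0 (by omega), hDE' 1 (by omega)]
        funext k
        simp only [hA, E, Pi.add_apply, Pi.smul_apply, smul_eq_mul]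
        rcases (show k.val = 3 ∨ k.val = 4 ∨ (k.val ≠ 3 ∧ k.val ≠ 4) by omega) with hk|hk|⟨hk,hk'⟩ <;>
          simp [hk] <;> norm_num <;> ring
      · rw [hDE' 4 (by omega), hDE' 0 (by omega), hDE' 2 (by omega)]
        funext k
        simp only [hA, E, Pi.add_apply, Pi.smul_apply, smul_eq_mul]
        rcases (show k.val = 3 ∨ k.val = 4 ∨ (k.val ≠ 3 ∧ k.val ≠ 4) by omega) with hk|hk|⟨hk,hk'⟩ <;>
          simp [hk] <;> norm_num <;> ring
    refine ⟨⟨D0, hmem⟩, ?_⟩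
    show (fun k => D0 (E n 0) k, _, _, _) = (u, b, c, M)
    refine Prod.ext ?_ (Prod.ext ?_ (Prod.ext ?_ ?_))
    · funext k
      rw [hDE' 0 (by omega)]
      simp [hA]
    · funext i
      show D0 (E n 1) _ = b i
      rw [hDE' 1 (by have := i.isLt; omega)]
      rfl
    · funext i
      show D0 (E n 2) _ = c i
      rw [hDE' 2 (by have := i.isLt; omega)]
      rfl
    · funext j k
      show D0 (Pi.single _ 1) _ = M j k
      rw [hDE _]
      simp only [hA]
      rw [if_neg (by have := j.isLt; omega), if_neg (by have := j.isLt; omega),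
        if_neg (by have := j.isLt; omega), if_neg (by have := j.isLt; omega),
        if_neg (by have := j.isLt; omega), dif_pos (by have := j.isLt; omega),
        dif_neg (by omega)]
      exact congrArg₂ M (Fin.ext (by simp)) (Fin.ext (by simp))
  have heq : Module.finrank ℂ (Der (n52 n)) = Module.finrank ℂ P :=
    (LinearEquiv.ofBijective Φ ⟨hinj, hsurj⟩).finrank_eq
  rw [heq]
  have hfr : Module.finrank ℂ P = n + ((n-1) + ((n-1) + (n-5)*(n-3))) := by
    simp [P, Module.finrank_prod, Module.finrank_pi, Module.finrank_pi_fintype,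
      Module.finrank_fintype_fun_eq_card, Finset.sum_const, Fintype.card_fin, smul_eq_mul]
  rw [hfr]
  have h5n : 5*n ≤ n^2 := by nlinarith
  zify [show 1 ≤ n by omega, show 3 ≤ n by omega, show 5 ≤ n from hn, h5n]
  ring

end FinrankDer
/-- derivations and maximal abelian ideal of n52. -/
theorem der_ab_n52 (n : ℕ) (hn : 5 ≤ n)  :
    Module.finrank ℂ (Der (n52 n)) = n ^ 2 - 5 * n + 13 ∧
    (∃ I : Submodule ℂ (V n), IsAbelianIdeal (n52 n) I ∧ Module.finrank ℂ I = n - 1) ∧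
    (∀ I : Submodule ℂ (V n), IsAbelianIdeal (n52 n) I → Module.finrank ℂ I ≤ n - 1) := by
  exact ⟨finrank_der hn, abelian_ideal_exists hn, fun I hI => abelian_ideal_le hn I hI⟩
end
end

section
/- Let n ≥ 5 and let λ be the Lie multiplication r₂⊕𝔞ₙ₋₂ on ℂⁿ. Then Der(λ) has dimension n² − 3n + 4, there exists an abelian ideal of λ of dimension n − 1, and every abelian ideal of λ has dimension at most n − 1. -/
noncomputable section

/-!
In coordinates indexed from 0, the bracket of `r₂ ⊕ 𝔞` is `[x, y] = (x₀y₁ - x₁y₀) e₁`. Testing the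
derivation identity on pairs of basis vectors shows that a linear map is a derivation exactly when
its matrix vanishes in row 0, in column 1 below row 1 and in row 1 right of column 1; these are
`3n - 4` independent entries, so `Der` has dimension `n² - 3n + 4`. The hyperplane `x₀ = 0` is an
abelian ideal of codimension one, and the whole space is not abelian because the bracket is nonzero.
-/

open Module

variable {m : ℕ}

lemma r2_apply (x y : V (m + 2)) :
    r2 (m + 2) x y = (x 0 * y 1 - x 1 * y 0) • Pi.single 1 1 := by
  ext k
  simp only [r2, ofTable, LinearMap.mk₂_apply, Fin.sum_univ_succ]
  induction k using Fin.cases with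
  | zero => simp [E]
  | succ k =>
    induction k using Fin.cases with
    | zero => simp [E, sub_eq_add_neg]
    | succ k => simp [E, Fin.succ_succ_ne_one]

lemma toMatrix'_eq_zero_of_mem_der_r2 {D : End ℂ (V (m + 2))}
    (hD : D ∈ Der (r2 (m + 2))) :
    (∀ j, LinearMap.toMatrix' D 0 j = 0) ∧ (∀ i : Fin m, LinearMap.toMatrix' D i.succ.succ 1 = 0) ∧
      ∀ j : Fin m, LinearMap.toMatrix' D 1 j.succ.succ = 0 := by
  have h01 := hD (Pi.single 0 1) (Pi.single 1 1)
  have h1j (j : Fin m) := hD (Pi.single 1 1) (Pi.single j.succ.succ 1)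
  have h0j (j : Fin m) := hD (Pi.single 0 1) (Pi.single j.succ.succ 1)
  simp only [LinearMap.toMatrix'_apply]
  refine ⟨fun j => ?_, fun i => ?_, fun j => ?_⟩
  · induction j using Fin.cases with
    | zero => simpa [r2_apply] using congrFun h01 1
    | succ j =>
      induction j using Fin.cases with
      | zero => simpa [r2_apply] using congrFun h01 0
      | succ j => simpa [r2_apply, Fin.succ_succ_ne_one] using congrFun (h1j j) 1
  · simpa [r2_apply, Pi.single_apply, Fin.succ_succ_ne_one] using congrFun h01 i.succ.succ
  · simpa [r2_apply, Fin.succ_succ_ne_one] using (congrFun (h0j j) 1).symm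

lemma mem_der_r2_of_toMatrix'_eq_zero {D : End ℂ (V (m + 2))}
    (h0 : ∀ j, LinearMap.toMatrix' D 0 j = 0)
    (hcol : ∀ i : Fin m, LinearMap.toMatrix' D i.succ.succ 1 = 0)
    (hrow : ∀ j : Fin m, LinearMap.toMatrix' D 1 j.succ.succ = 0) : D ∈ Der (r2 (m + 2)) := by
  set M := LinearMap.toMatrix' D
  have hcoord (x : V (m + 2)) (i) : D x i = ∑ j, M i j * x j := by
    rw [← LinearMap.toMatrix'_mulVec]; rfl
  have hD0 (x : V (m + 2)) : D x 0 = 0 := by simp [hcoord, h0]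
  have hD1 (x : V (m + 2)) : D x 1 = M 1 0 * x 0 + M 1 1 * x 1 := by
    simp [hcoord, Fin.sum_univ_succ, hrow]
  have hDe1 : D (Pi.single 1 1) = M 1 1 • Pi.single 1 1 := by
    ext i
    induction i using Fin.cases with
    | zero => simpa using hD0 _
    | succ i =>
      induction i using Fin.cases with
      | zero => simp [M]
      | succ i => simpa [M, Fin.succ_succ_ne_one] using hcol i
  intro x y
  rw [r2_apply, r2_apply, r2_apply, map_smul, hDe1, hD0, hD0, hD1, hD1, smul_smul, ← add_smul]
  congr 1
  ring

variable (m) in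
def r2DerZeroEntry : Fin (m + 2) ⊕ Fin m ⊕ Fin m → Fin (m + 2) × Fin (m + 2)
  | .inl j => (0, j)
  | .inr (.inl i) => (i.succ.succ, 1)
  | .inr (.inr j) => (1, j.succ.succ)

lemma r2DerZeroEntry_injective : Function.Injective (r2DerZeroEntry m) := by
  rintro (a | a | a) (b | b | b) h <;>
    simp_all [r2DerZeroEntry, Fin.succ_succ_ne_one, (Fin.succ_succ_ne_one _).symm,
      (Fin.succ_ne_zero _).symm]

variable (m) in
def r2DerConstraints : End ℂ (V (m + 2)) →ₗ[ℂ] (Fin (m + 2) ⊕ Fin m ⊕ Fin m → ℂ) :=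
  LinearMap.funLeft ℂ ℂ (r2DerZeroEntry m) ∘ₗ
    (LinearEquiv.curry ℂ ℂ _ _).symm.toLinearMap ∘ₗ LinearMap.toMatrix'.toLinearMap

lemma der_r2_eq_ker : Der (r2 (m + 2)) = LinearMap.ker (r2DerConstraints m) := by
  ext D
  simp only [LinearMap.mem_ker, funext_iff, Sum.forall]
  constructor
  · exact toMatrix'_eq_zero_of_mem_der_r2
  · rintro ⟨h0, hcol, hrow⟩
    exact mem_der_r2_of_toMatrix'_eq_zero h0 hcol hrow

lemma finrank_der_r2 : finrank ℂ (Der (r2 (m + 2))) = m ^ 2 + m + 2 := by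
  have hsurj : Function.Surjective (r2DerConstraints m) :=
    (LinearMap.funLeft_surjective_of_injective ℂ ℂ _ r2DerZeroEntry_injective).comp
      ((LinearEquiv.curry ℂ ℂ _ _).symm.surjective.comp LinearMap.toMatrix'.surjective)
  have h := LinearMap.finrank_range_add_finrank_ker (r2DerConstraints m)
  rw [LinearMap.range_eq_top.mpr hsurj, finrank_top, ← der_r2_eq_ker] at h
  simp only [finrank_fintype_fun_eq_card, Fintype.card_sum, Fintype.card_fin,
    finrank_linearMap] at h
  linarith

lemma finrank_ker_proj {n : ℕ} (i : Fin n) :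
    finrank ℂ (LinearMap.ker (LinearMap.proj i : V n →ₗ[ℂ] ℂ)) = n - 1 := by
  have hi : (LinearMap.proj i : V n →ₗ[ℂ] ℂ) ≠ 0 := fun h => by
    simpa using LinearMap.congr_fun h (Pi.single i 1)
  have := Dual.finrank_ker_add_one_of_ne_zero hi
  rw [finrank_fin_fun] at this
  omega

lemma finrank_lt_of_isAbelianIdeal {n : ℕ} {lam : Bil n} (hlam : lam ≠ 0) {I : Submodule ℂ (V n)}
    (hI : IsAbelianIdeal lam I) : finrank ℂ I < n := by
  refine (Submodule.finrank_le I).trans_eq (finrank_fin_fun ℂ) |>.lt_of_ne fun h => hlam ?_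
  have hI_top : I = ⊤ := Submodule.eq_top_of_finrank_eq (h.trans (finrank_fin_fun ℂ).symm)
  exact LinearMap.ext₂ fun x y => hI.2 x (hI_top ▸ trivial) y (hI_top ▸ trivial)

lemma r2_ne_zero : r2 (m + 2) ≠ 0 := fun h => by
  simpa [r2_apply] using LinearMap.congr_fun₂ h (Pi.single 0 1) (Pi.single 1 1)

lemma isAbelianIdeal_r2_ker_proj_zero :
    IsAbelianIdeal (r2 (m + 2)) (LinearMap.ker (LinearMap.proj 0)) := by
  refine ⟨fun x v hv => ?_, fun v hv w hw => ?_⟩ <;> simp_all [r2_apply]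

/-- derivations and maximal abelian ideal of r2. -/
theorem der_ab_r2 (n : ℕ) (hn : 5 ≤ n)  :
    Module.finrank ℂ (Der (r2 n)) = n ^ 2 - 3 * n + 4 ∧
    (∃ I : Submodule ℂ (V n), IsAbelianIdeal (r2 n) I ∧ Module.finrank ℂ I = n - 1) ∧
    (∀ I : Submodule ℂ (V n), IsAbelianIdeal (r2 n) I → Module.finrank ℂ I ≤ n - 1) := by
  obtain ⟨m, rfl⟩ : ∃ m, n = m + 2 := ⟨n - 2, by omega⟩
  refine ⟨?_, ⟨_, isAbelianIdeal_r2_ker_proj_zero, finrank_ker_proj 0⟩,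
    fun I hI => Nat.le_sub_one_of_lt (finrank_lt_of_isAbelianIdeal r2_ne_zero hI)⟩
  have hsq : (m + 2) ^ 2 = m ^ 2 + 4 * m + 4 := by ring
  rw [finrank_der_r2]
  omega
end
end

section
/- Let n ≥ 3. Then Der(J₁) has dimension n² − 2n + 1 and Der(J₂) has dimension n² − 2n + 1. -/
noncomputable section

/-- `J₁`: `e₁·e₁ = e₁`. -/
def J1 (n : ℕ) : Bil n :=
  ofTable fun i j => if i.val = 0 ∧ j.val = 0 then E n 0 else 0

/-- `J₂`: `e₁·e₁ = e₁`, `e₁·eᵢ = eᵢ·e₁ = eᵢ` for `2 ≤ i ≤ n`. -/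
def J2 (n : ℕ) : Bil n :=
  ofTable fun i j =>
    if i.val = 0 then E n j.val else if j.val = 0 then E n i.val else 0

/-- `J₃`: `e₁·e₂ = e₂·e₁ = e₃`. -/
def J3 (n : ℕ) : Bil n :=
  ofTable fun i j =>
    if (i.val = 0 ∧ j.val = 1) ∨ (i.val = 1 ∧ j.val = 0) then E n 2 else 0


section Aux
def rowcol (n : ℕ) [NeZero n] : Module.End ℂ (V n) →ₗ[ℂ] (V n × (V n →ₗ[ℂ] ℂ)) where
  toFun D := (D (E n 0), (LinearMap.proj 0).comp D)
  map_add' D1 D2 := by ext x <;> simp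
  map_smul' c D := by ext x <;> simp

lemma mem_ker_rowcol (n : ℕ) [NeZero n] (D : Module.End ℂ (V n)) :
    D ∈ LinearMap.ker (rowcol n) ↔ D (E n 0) = 0 ∧ ∀ x, D x 0 = 0 := by
  simp [rowcol, LinearMap.mem_ker, Prod.ext_iff, LinearMap.ext_iff]

def gmap (n : ℕ) [NeZero n] : (V n × (V n →ₗ[ℂ] ℂ)) →ₗ[ℂ] ℂ where
  toFun p := p.1 0 - p.2 (E n 0)
  map_add' p q := by simp; ring
  map_smul' c p := by simp; ring

lemma E00 (n : ℕ) [NeZero n] : E n 0 (0 : Fin n) = 1 := by simp [E]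

lemma range_rowcol (n : ℕ) [NeZero n] :
    LinearMap.range (rowcol n) = LinearMap.ker (gmap n) := by
  ext p
  constructor
  · rintro ⟨D, rfl⟩
    simp [rowcol, gmap, LinearMap.mem_ker]
  · intro hp
    obtain ⟨v, f⟩ := p
    have hvf : v 0 = f (E n 0) := by
      have := (LinearMap.mem_ker.mp hp)
      simpa [gmap, sub_eq_zero] using this
    refine ⟨f.smulRight (E n 0) + (LinearMap.proj 0 : V n →ₗ[ℂ] ℂ).smulRight (v - v 0 • E n 0), ?_⟩
    have h1 : (f.smulRight (E n 0) + (LinearMap.proj 0 : V n →ₗ[ℂ] ℂ).smulRight (v - v 0 • E n 0)) (E n 0) = v := by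
      simp [LinearMap.smulRight_apply, E00, ← hvf]
    refine Prod.ext ?_ ?_
    · simpa [rowcol] using h1
    · simp only [rowcol]
      ext x
      simp [LinearMap.smulRight_apply, E00]

lemma gmap_surj (n : ℕ) [NeZero n] : Function.Surjective (gmap n) := by
  intro c
  refine ⟨(c • E n 0, 0), ?_⟩
  simp [gmap, E00]

lemma finrank_ker_rowcol (n : ℕ) [NeZero n] (hn : 3 ≤ n) :
    Module.finrank ℂ (LinearMap.ker (rowcol n)) = n ^ 2 - 2 * n + 1 := by
  have hdual : Module.finrank ℂ (V n →ₗ[ℂ] ℂ) = n := by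
    simp [Module.finrank_linearMap]
  have hprod : Module.finrank ℂ (V n × (V n →ₗ[ℂ] ℂ)) = n + n := by
    simp [Module.finrank_prod, hdual]
  have hEnd : Module.finrank ℂ (Module.End ℂ (V n)) = n * n := by
    simp [Module.End, Module.finrank_linearMap]
  have hg := LinearMap.finrank_range_add_finrank_ker (gmap n)
  have hrg : Module.finrank ℂ (LinearMap.range (gmap n)) = 1 := by
    rw [LinearMap.range_eq_top.mpr (gmap_surj n)]
    simpa using Module.finrank_self ℂ
  have hkerg : Module.finrank ℂ (LinearMap.ker (gmap n)) = 2 * n - 1 := by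
    rw [hrg, hprod] at hg
    omega
  have hF := LinearMap.finrank_range_add_finrank_ker (rowcol n)
  rw [hEnd, range_rowcol, hkerg] at hF
  have hsq : n ^ 2 = n * n := sq n
  have h2 : 2 * n ≤ n * n := by nlinarith
  omega

lemma val_zero_iff (n : ℕ) [NeZero n] (i : Fin n) : i.val = 0 ↔ i = 0 := by
  rw [← Fin.val_zero n, Fin.val_eq_val]

lemma J2_apply (n : ℕ) [NeZero n] (x y : V n) :
    J2 n x y = x 0 • y + y 0 • x - (x 0 * y 0) • E n 0 := by
  funext m
  have hE : ∀ (k m : Fin n), E n k.val m = if m = k then 1 else 0 := by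
    intro k m; simp [E, Fin.val_eq_val]
  simp only [J2, ofTable, LinearMap.mk₂_apply, val_zero_iff, Finset.sum_apply,
    Pi.smul_apply, Pi.add_apply, Pi.sub_apply, smul_eq_mul, ite_apply,
    Pi.zero_apply, hE, mul_ite, mul_zero, mul_one]
  have h1 : ∀ i : Fin n, (∑ j : Fin n,
      if i = 0 then if m = j then x i * y j else 0
      else if j = 0 then if m = i then x i * y j else 0 else 0)
      = if i = 0 then x 0 * y m else if m = i then x i * y 0 else 0 := by
    intro i
    by_cases hi : i = 0
    · subst hi
      simp [Finset.sum_ite_eq]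
    · simp [hi, Finset.sum_ite_eq']
  rw [Finset.sum_congr rfl (fun i _ => h1 i)]
  rcases eq_or_ne m 0 with hm | hm
  · subst hm
    have h2 : ∀ i : Fin n, (if i = 0 then x 0 * y 0 else if (0:Fin n) = i then x i * y 0 else 0)
        = if i = 0 then x 0 * y 0 else 0 := by
      intro i
      by_cases hi : i = 0
      · simp [hi]
      · simp [hi, Ne.symm hi]
    rw [Finset.sum_congr rfl (fun i _ => h2 i), Finset.sum_ite_eq' Finset.univ (0:Fin n)]
    simp [E]
    ring
  · have h2 : ∀ i : Fin n, (if i = 0 then x 0 * y m else if m = i then x i * y 0 else 0)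
        = (if i = 0 then x 0 * y m else 0) + (if m = i then x i * y 0 else 0) := by
      intro i; by_cases hi : i = 0 <;> simp [hi, hm]
    rw [Finset.sum_congr rfl (fun i _ => h2 i), Finset.sum_add_distrib,
      Finset.sum_ite_eq' Finset.univ (0:Fin n), Finset.sum_ite_eq Finset.univ m]
    have : E n 0 m = 0 := by simpa [E, val_zero_iff] using hm
    simp [this]
    ring

lemma J1_apply (n : ℕ) [NeZero n] (x y : V n) :
    J1 n x y = (x 0 * y 0) • E n 0 := by
  simp [J1, ofTable, ite_and, val_zero_iff]

lemma E_fun (n : ℕ) (i : Fin n) : E n i.val = fun j => if i = j then (1:ℂ) else 0 := by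
  funext m
  simp [E, Fin.val_eq_val, eq_comm]

lemma mem_Der {n : ℕ} (lam : Bil n) (D : Module.End ℂ (V n)) :
    D ∈ Der lam ↔ ∀ x y, D (lam x y) = lam (D x) y + lam x (D y) := Iff.rfl

lemma row_zero_of_basis {n : ℕ} [NeZero n] (D : Module.End ℂ (V n))
    (h : ∀ i : Fin n, D (E n i.val) 0 = 0) : ∀ x : V n, D x 0 = 0 := by
  intro x
  have hx : x = ∑ i : Fin n, x i • E n i.val := by
    conv_lhs => rw [pi_eq_sum_univ x]
    exact Finset.sum_congr rfl fun i _ => by rw [E_fun]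
  rw [hx, map_sum]
  simp [h]

lemma der_J1_eq (n : ℕ) [NeZero n] : Der (J1 n) = LinearMap.ker (rowcol n) := by
  ext D
  rw [mem_ker_rowcol, mem_Der]
  constructor
  · intro hD
    have key : ∀ x y : V n, (x 0 * y 0) • D (E n 0)
        = ((D x) 0 * y 0 + x 0 * (D y) 0) • E n 0 := by
      intro x y
      have h := hD x y
      rw [J1_apply, J1_apply, J1_apply, map_smul, ← add_smul] at h
      exact h
    have h0 : D (E n 0) = 0 := by
      have h := key (E n 0) (E n 0)
      rw [E00] at h
      have h0' := congrFun h 0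
      simp [E00] at h0'
      simpa [h0'] using h
    refine ⟨h0, ?_⟩
    intro x
    have h := key x (E n 0)
    rw [E00, h0] at h
    have h' := congrFun h.symm 0
    simp [E00, h0] at h'
    exact h'
  · rintro ⟨h0, hrow⟩ x y
    rw [J1_apply, J1_apply, J1_apply, map_smul, h0, hrow, hrow]
    simp

lemma der_J2_eq (n : ℕ) [NeZero n] : Der (J2 n) = LinearMap.ker (rowcol n) := by
  ext D
  rw [mem_ker_rowcol, mem_Der]
  constructor
  · intro hD
    have key : ∀ x y : V n, x 0 • D y + y 0 • D x - (x 0 * y 0) • D (E n 0)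
        = ((D x) 0 • y + y 0 • D x - ((D x) 0 * y 0) • E n 0)
          + (x 0 • D y + (D y) 0 • x - (x 0 * (D y) 0) • E n 0) := by
      intro x y
      have h := hD x y
      rw [J2_apply, J2_apply, J2_apply, map_sub, map_add, map_smul, map_smul, map_smul] at h
      exact h
    have h0 : D (E n 0) = 0 := by
      have h := key (E n 0) (E n 0)
      rw [E00] at h
      simp at h
      exact h
    have hb : ∀ i : Fin n, D (E n i.val) 0 = 0 := by
      intro i
      rcases eq_or_ne i 0 with hi | hi
      · rw [hi]; simp [h0]
      · have hEi0 : E n i.val 0 = 0 := by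
          simp [E, eq_comm, val_zero_iff, hi]
        have h := key (E n i.val) (E n i.val)
        rw [hEi0, h0] at h
        simp at h
        have h' := congrFun h i
        simp [E] at h'
        have : D (E n i.val) 0 + D (E n i.val) 0 = 0 := h'.symm
        linear_combination this / 2
    exact ⟨h0, row_zero_of_basis D hb⟩
  · rintro ⟨h0, hrow⟩ x y
    rw [J2_apply, J2_apply, J2_apply, map_sub, map_add, map_smul, map_smul, map_smul,
      h0, hrow, hrow]
    simp
    abel

end Aux

/-- dimensions of the derivation algebras of `J₁` and `J₂`. -/
theorem der_J1_J2 (n : ℕ) (hn : 3 ≤ n) :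
    Module.finrank ℂ (Der (J1 n)) = n ^ 2 - 2 * n + 1 ∧
    Module.finrank ℂ (Der (J2 n)) = n ^ 2 - 2 * n + 1 := by
  have : NeZero n := ⟨by omega⟩
  rw [der_J1_eq, der_J2_eq]
  exact ⟨finrank_ker_rowcol n hn, finrank_ker_rowcol n hn⟩
end
end

section
/- Let n ≥ 3. Then Der(J₃) has dimension n² − 3n + 4. -/
noncomputable section

/-!
Indices are 0-based, so the paper's `e₃` is `Pi.single 2 1`. Since
`J₃ x y = (x₀ y₁ + x₁ y₀) e₂`, the derivation identity on pairs of basis vectors forces the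
matrix of a derivation `D` to have row 0 equal to `d₀₀ e₀ᵀ`, row 1 equal to `d₁₁ e₁ᵀ` and
column 2 equal to `(d₀₀ + d₁₁) e₂`, and every such matrix is a derivation. The entries in
rows `2, …, n-1` and columns `≠ 2` are free, so `Der(J₃) ≅ ℂ × ℂ × ℂ^((n-2)(n-1))`, and
`2 + (n-2)(n-1) = n² - 3n + 4`.
-/

section

variable {m : ℕ}

lemma Nat.two_mod_add_three : 2 % (m + 3) = 2 := Nat.mod_eq_of_lt (by omega)

lemma Fin.succ_succ_eq_two_iff (k : Fin (m + 1)) : k.succ.succ = 2 ↔ k = 0 := by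
  rw [← Fin.succ_one_eq_two, ← Fin.succ_zero_eq_one, Fin.succ_inj, Fin.succ_inj]

lemma J3_apply (x y : V (m + 3)) :
    J3 (m + 3) x y = (x 0 * y 1 + x 1 * y 0) • Pi.single 2 1 := by
  have hE : E (m + 3) 2 = Pi.single 2 1 := by
    ext k
    simp [E, Pi.single_apply, Fin.ext_iff, Nat.two_mod_add_three]
  simp [J3, ofTable, Fin.sum_univ_succ (n := m + 2), hE, add_smul]

lemma mem_der_J3_iff (D : Module.End ℂ (V (m + 3))) :
    D ∈ Der (J3 (m + 3)) ↔
      (∀ x, D x 0 = D (Pi.single 0 1) 0 * x 0) ∧ (∀ x, D x 1 = D (Pi.single 1 1) 1 * x 1) ∧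
      D (Pi.single 2 1) = (D (Pi.single 0 1) 0 + D (Pi.single 1 1) 1) • Pi.single 2 1 := by
  have hder : D ∈ Der (J3 (m + 3)) ↔ ∀ x y : V (m + 3),
      (x 0 * y 1 + x 1 * y 0) • D (Pi.single 2 1) =
        (D x 0 * y 1 + D x 1 * y 0 + (x 0 * D y 1 + x 1 * D y 0)) • Pi.single 2 1 := by
    refine forall₂_congr fun x y => ?_
    rw [J3_apply, J3_apply, J3_apply, map_smul, ← add_smul]
  rw [hder]
  constructor
  · intro hd
    have hcol :
        D (Pi.single 2 1) = (D (Pi.single 0 1) 0 + D (Pi.single 1 1) 1) • Pi.single 2 1 := by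
      simpa using hd (Pi.single 0 1) (Pi.single 1 1)
    have h10 : D (Pi.single 0 1) 1 = 0 := by
      have h := congrFun (hd (Pi.single 0 1) (Pi.single 0 1)) 2
      simp at h
      linear_combination -h / 2
    have h01 : D (Pi.single 1 1) 0 = 0 := by
      have h := congrFun (hd (Pi.single 1 1) (Pi.single 1 1)) 2
      simp at h
      linear_combination -h / 2
    refine ⟨fun x => ?_, fun x => ?_, hcol⟩
    · have h := congrFun (hd x (Pi.single 1 1)) 2
      simp [hcol, h01] at h
      linear_combination -h
    · have h := congrFun (hd x (Pi.single 0 1)) 2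
      simp [hcol, h10] at h
      linear_combination -h
  · rintro ⟨hrow0, hrow1, hcol⟩ x y
    rw [hcol, hrow0 x, hrow1 x, hrow0 y, hrow1 y, smul_smul]
    ring_nf

def derJ3Coords (m : ℕ) : Der (J3 (m + 3)) →ₗ[ℂ] ℂ × ℂ × (Fin (m + 1) → Fin (m + 2) → ℂ) where
  toFun D := (D.1 (Pi.single 0 1) 0, D.1 (Pi.single 1 1) 1,
    fun k l => D.1 (Pi.single (Fin.succAbove 2 l) 1) k.succ.succ)
  map_add' _ _ := rfl
  map_smul' _ _ := rfl

def derJ3Matrix (a b : ℂ) (F : Fin (m + 1) → Fin (m + 2) → ℂ) :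
    Matrix (Fin (m + 3)) (Fin (m + 3)) ℂ :=
  Fin.cons (Pi.single 0 a) <| Fin.cons (Pi.single 1 b) fun k =>
    Fin.insertNth 2 ((Pi.single 0 (a + b) : Fin (m + 1) → ℂ) k) (F k)

section derJ3Matrix

variable (a b : ℂ) (F : Fin (m + 1) → Fin (m + 2) → ℂ)

@[simp] lemma derJ3Matrix_zero : derJ3Matrix a b F 0 = Pi.single 0 a := rfl

@[simp] lemma derJ3Matrix_one : derJ3Matrix a b F 1 = Pi.single 1 b := rfl

@[simp] lemma derJ3Matrix_succ_succ (k : Fin (m + 1)) :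
    derJ3Matrix a b F k.succ.succ =
      Fin.insertNth 2 ((Pi.single 0 (a + b) : Fin (m + 1) → ℂ) k) (F k) := rfl

end derJ3Matrix

lemma toLin'_derJ3Matrix_mem_der (a b : ℂ) (F : Fin (m + 1) → Fin (m + 2) → ℂ) :
    Matrix.toLin' (derJ3Matrix a b F) ∈ Der (J3 (m + 3)) := by
  rw [mem_der_J3_iff]
  simp only [Matrix.toLin'_apply, Matrix.mulVec_single_one]
  refine ⟨fun x => ?_, fun x => ?_, ?_⟩
  · simp [Matrix.mulVec]
  · simp [Matrix.mulVec]
  · ext i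
    induction i using Fin.cases with
    | zero => simp [Fin.ext_iff, Nat.two_mod_add_three]
    | succ i =>
      induction i using Fin.cases with
      | zero => simp [Fin.ext_iff, Nat.two_mod_add_three]
      | succ k =>
        simp [Pi.single_apply, Fin.succ_succ_eq_two_iff]

lemma derJ3Coords_surjective : Function.Surjective (derJ3Coords m) := by
  rintro ⟨a, b, F⟩
  refine ⟨⟨_, toLin'_derJ3Matrix_mem_der a b F⟩, ?_⟩
  simp [derJ3Coords]

lemma derJ3Coords_injective : Function.Injective (derJ3Coords m) := by
  refine (injective_iff_map_eq_zero _).2 fun ⟨D, hD⟩ h0 => ?_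
  simp only [derJ3Coords, LinearMap.coe_mk, AddHom.coe_mk, Prod.mk_eq_zero] at h0
  obtain ⟨hd00, hd11, hF⟩ := h0
  obtain ⟨hrow0, hrow1, hcol⟩ := (mem_der_J3_iff D).1 hD
  rw [hd00] at hrow0 hcol
  rw [hd11] at hrow1 hcol
  rw [Submodule.mk_eq_zero]
  refine (Pi.basisFun ℂ (Fin (m + 3))).ext fun j => funext fun i => ?_
  rw [Pi.basisFun_apply]
  induction i using Fin.cases with
  | zero => simp [hrow0]
  | succ i =>
    induction i using Fin.cases with
    | zero => simp [hrow1]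
    | succ k =>
      obtain rfl | ⟨l, rfl⟩ := Fin.eq_self_or_eq_succAbove 2 j
      · simp [hcol]
      · exact congrFun (congrFun hF k) l

end

/-- dimension of the derivation algebra of `J₃`. -/
theorem der_J3 (n : ℕ) (hn : 3 ≤ n) :
    Module.finrank ℂ (Der (J3 n)) = n ^ 2 - 3 * n + 4 := by
  obtain ⟨m, rfl⟩ := Nat.exists_eq_add_of_le' hn
  rw [(LinearEquiv.ofBijective (derJ3Coords m)
    ⟨derJ3Coords_injective, derJ3Coords_surjective⟩).finrank_eq]
  simp only [Module.finrank_prod, Module.finrank_self, Module.finrank_pi_fintype,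
    Fintype.card_fin, Finset.sum_const, Finset.card_univ, smul_eq_mul]
  rw [sq, ← Nat.sub_mul, Nat.add_sub_cancel]
  ring
end
end

section
/- Let n ≥ 3 and let ζ₂, …, ζₙ be scalars, each equal to 0, 1/2, or 1, such that ζᵢ ≠ ζⱼ for some i, j. Let J(ζ) be the multiplication on ℂⁿ with e₁e₁ = e₁ and e₁eᵢ = eᵢe₁ = ζᵢeᵢ for 2 ≤ i ≤ n. Then J₃ lies in closure(Orb(J(ζ))). -/
noncomputable section

/-- `J(ζ)`: `e₁e₁ = e₁`, `e₁eᵢ = eᵢe₁ = ζᵢ eᵢ` for `2 ≤ i ≤ n`. -/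
def Jzeta (n : ℕ) (ζ : Fin n → ℂ) : Bil n :=
  ofTable fun i j =>
    if i.val = 0 ∧ j.val = 0 then E n 0
    else if i.val = 0 ∧ 1 ≤ j.val then ζ j • E n j.val
    else if j.val = 0 ∧ 1 ≤ i.val then ζ i • E n i.val
    else 0

/-!
Index the basis from 0, as `E` does. Swapping `e₂` with a suitable `e_c` (`c ≥ 2`), which fixes
`e₀` and `e₁`, reduces to the case `ζ₁ ≠ ζ₂`. For `t ≠ 0` the vectors `f₀ = e₁ + e₂`, `f₁ = t e₀`,
`f₂ = t (ζ₁ e₁ + ζ₂ e₂)` and `fₘ = eₘ` (`m ≥ 3`) form a basis, in which `J(ζ)` reads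
`f₀f₁ = f₂`, `f₁f₁ = t f₁`, `f₁f₂ = -t² ζ₁ζ₂ f₀ + t (ζ₁ + ζ₂) f₂`, `f₁fₘ = t ζₘ fₘ`.
These structure constants are polynomial in `t`, and at `t = 0` only `f₀f₁ = f₂` survives:
this is `J₃`.
-/

lemma ofTable_apply {n : ℕ} (c : Fin n → Fin n → V n) (u v : V n) (m : Fin n) :
    ofTable c u v m = ∑ i, ∑ j, u i * v j * c i j m := by
  simp [ofTable, Finset.sum_apply]

lemma Jzeta_apply {n : ℕ} [NeZero n] (ζ : Fin n → ℂ) (u v : V n) (m : Fin n) :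
    Jzeta n ζ u v m = if m = 0 then u 0 * v 0 else ζ m * (u 0 * v m + u m * v 0) := by
  have table : ∀ i j : Fin n,
      (if i.val = 0 ∧ j.val = 0 then E n 0
        else if i.val = 0 ∧ 1 ≤ j.val then ζ j • E n j.val
        else if j.val = 0 ∧ 1 ≤ i.val then ζ i • E n i.val
        else 0) m =
      (if i = 0 ∧ j = 0 ∧ m = 0 then 1 else 0) + (if i = 0 ∧ j = m ∧ m ≠ 0 then ζ m else 0) +
        (if j = 0 ∧ i = m ∧ m ≠ 0 then ζ m else 0) := by
    intro i j
    simp only [E, ite_apply, Pi.smul_apply, Pi.zero_apply, smul_eq_mul, Nat.one_le_iff_ne_zero,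
      Fin.val_eq_zero_iff, Fin.val_inj]
    split_ifs <;> grind
  simp only [Jzeta, ofTable_apply, table, mul_add, Finset.sum_add_distrib]
  split_ifs with hm
  · simp [hm, ite_and]
  · simp [hm, ite_and]
    ring

lemma J3_apply_s16 {k : ℕ} (u v : V (k + 3)) (m : Fin (k + 3)) :
    J3 (k + 3) u v m = if m = 2 then u 0 * v 1 + u 1 * v 0 else 0 := by
  have table : ∀ i j : Fin (k + 3),
      (if (i.val = 0 ∧ j.val = 1) ∨ (i.val = 1 ∧ j.val = 0) then E (k + 3) 2 else 0) m =
        (if i = 0 ∧ j = 1 ∧ m = 2 then 1 else 0) + (if i = 1 ∧ j = 0 ∧ m = 2 then 1 else 0) := by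
    intro i j
    simp only [E, ite_apply, Pi.zero_apply, Fin.ext_iff, Fin.val_zero, Fin.val_one, Fin.val_two]
    split_ifs <;> first | omega | norm_num
  simp only [J3, ofTable_apply, table, mul_add, Finset.sum_add_distrib]
  split_ifs with hm <;> simp [hm, ite_and]

section Orbit

variable {n : ℕ}

lemma act_apply (g : V n ≃ₗ[ℂ] V n) (μ : Bil n) (x y : V n) :
    act g μ x y = g (μ (g.symm x) (g.symm y)) := rfl

lemma act_symm_eq_iff (g : V n ≃ₗ[ℂ] V n) (μ ν : Bil n) :
    act g.symm μ = ν ↔ ∀ x y, μ (g x) (g y) = g (ν x y) := by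
  simp only [LinearMap.ext_iff, act_apply, LinearEquiv.symm_symm, LinearEquiv.symm_apply_eq]

lemma act_trans (g h : V n ≃ₗ[ℂ] V n) (μ : Bil n) : act h (act g μ) = act (g.trans h) μ := by
  ext x y
  simp [act_apply]

lemma closure_orb_subset_of_mem_orb {μ ν : Bil n} (h : ν ∈ orb μ) :
    closure (orb ν) ⊆ closure (orb μ) := by
  obtain ⟨g, rfl⟩ := h
  refine closure_mono ?_
  rintro _ ⟨h, rfl⟩
  exact ⟨g.trans h, (act_trans g h μ).symm⟩

lemma continuous_bil_iff {X : Type*} [TopologicalSpace X] {F : X → Bil n} :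
    Continuous F ↔ ∀ x y m, Continuous fun t => F t x y m := by
  simp only [continuous_induced_rng, continuous_pi_iff]
  rfl

lemma mem_closure_orb_of_continuous {μ : Bil n} {F : ℂ → Bil n} (hF : Continuous F)
    (horb : ∀ t ≠ 0, F t ∈ orb μ) : F 0 ∈ closure (orb μ) :=
  mem_closure_of_tendsto (hF.continuousAt.mono_left nhdsWithin_le_nhds)
    (eventually_nhdsWithin_of_forall (s := {0}ᶜ) horb)

end Orbit

lemma Jzeta_comp_perm_mem_orb {n : ℕ} [NeZero n] (ζ : Fin n → ℂ) (τ : Equiv.Perm (Fin n))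
    (hτ : τ 0 = 0) : Jzeta n (ζ ∘ τ) ∈ orb (Jzeta n ζ) := by
  refine ⟨(LinearEquiv.funCongrLeft ℂ ℂ τ.symm).symm, ?_⟩
  have hτ' : τ.symm 0 = 0 := by rw [Equiv.symm_apply_eq, hτ]
  rw [act_symm_eq_iff]
  intro x y
  funext m
  simp only [LinearEquiv.funCongrLeft_apply, LinearMap.funLeft_apply, Jzeta_apply, hτ',
    Function.comp_apply, Equiv.apply_symm_apply, Equiv.symm_apply_eq, hτ]

section Degeneration

variable {k : ℕ}

@[simp] lemma fin_two_ne_zero : (2 : Fin (k + 3)) ≠ 0 :=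
  Fin.ne_of_val_ne (by rw [Fin.val_two, Fin.val_zero]; omega)

@[simp] lemma fin_two_ne_one : (2 : Fin (k + 3)) ≠ 1 :=
  Fin.ne_of_val_ne (by rw [Fin.val_two, Fin.val_one]; omega)

/-- `degenMap t ζ₁ ζ₂` sends each `eᵢ` to the `fᵢ` of the basis change above. -/
def degenMap (t p q : ℂ) : V (k + 3) →ₗ[ℂ] V (k + 3) where
  toFun x m :=
    if m = 0 then t * x 1
    else if m = 1 then x 0 + t * p * x 2
    else if m = 2 then x 0 + t * q * x 2
    else x m
  map_add' x y := by
    funext m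
    simp only [Pi.add_apply]
    split_ifs <;> ring
  map_smul' c x := by
    funext m
    simp only [Pi.smul_apply, smul_eq_mul, RingHom.id_apply]
    split_ifs <;> ring

lemma degenMap_injective {t p q : ℂ} (ht : t ≠ 0) (hpq : p ≠ q) :
    Function.Injective (degenMap (k := k) t p q) := by
  rw [← LinearMap.ker_eq_bot, LinearMap.ker_eq_bot']
  intro x hx
  have hx0 := congr_fun hx 0
  have hx1 := congr_fun hx 1
  have hx2 := congr_fun hx 2
  simp only [degenMap, LinearMap.coe_mk, AddHom.coe_mk, Pi.zero_apply] at hx0 hx1 hx2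
  simp only [one_ne_zero, fin_two_ne_zero, fin_two_ne_one, if_true, if_false] at hx0 hx1 hx2
  have x1 : x 1 = 0 := (mul_eq_zero.1 hx0).resolve_left ht
  have x2 : x 2 = 0 := by
    have : t * (p - q) * x 2 = 0 := by linear_combination hx1 - hx2
    simpa [ht, sub_ne_zero.2 hpq] using this
  have x0 : x 0 = 0 := by simpa [x2] using hx1
  funext m
  have hxm := congr_fun hx m
  simp only [degenMap, LinearMap.coe_mk, AddHom.coe_mk, Pi.zero_apply] at hxm
  split_ifs at hxm <;> simp_all

def degenEquiv {t p q : ℂ} (ht : t ≠ 0) (hpq : p ≠ q) : V (k + 3) ≃ₗ[ℂ] V (k + 3) :=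
  LinearEquiv.ofInjectiveEndo _ (degenMap_injective ht hpq)

def degenFamily (ζ : Fin (k + 3) → ℂ) (t : ℂ) : Bil (k + 3) :=
  LinearMap.mk₂ ℂ
    (fun x y m =>
      if m = 0 then -t ^ 2 * ζ 1 * ζ 2 * (x 1 * y 2 + x 2 * y 1)
      else if m = 1 then t * x 1 * y 1
      else if m = 2 then x 0 * y 1 + x 1 * y 0 + t * (ζ 1 + ζ 2) * (x 1 * y 2 + x 2 * y 1)
      else t * ζ m * (x 1 * y m + x m * y 1))
    (fun x x' y => by funext m; simp only [Pi.add_apply]; split_ifs <;> ring)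
    (fun c x y => by funext m; simp only [Pi.smul_apply, smul_eq_mul]; split_ifs <;> ring)
    (fun x y y' => by funext m; simp only [Pi.add_apply]; split_ifs <;> ring)
    (fun c x y => by funext m; simp only [Pi.smul_apply, smul_eq_mul]; split_ifs <;> ring)

lemma continuous_degenFamily (ζ : Fin (k + 3) → ℂ) : Continuous (degenFamily ζ) :=
  continuous_bil_iff.2 fun x y m => by
    simp only [degenFamily, LinearMap.mk₂_apply]
    split_ifs <;> fun_prop

lemma degenFamily_zero (ζ : Fin (k + 3) → ℂ) : degenFamily ζ 0 = J3 (k + 3) := by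
  refine LinearMap.ext fun x => LinearMap.ext fun y => funext fun m => ?_
  simp only [degenFamily, LinearMap.mk₂_apply, J3_apply_s16]
  split_ifs <;> subst_vars <;> simp_all [fin_two_ne_zero.symm, fin_two_ne_one.symm]

lemma act_degenEquiv_symm (ζ : Fin (k + 3) → ℂ) {t : ℂ} (ht : t ≠ 0) (hζ : ζ 1 ≠ ζ 2) :
    act (degenEquiv ht hζ).symm (Jzeta (k + 3) ζ) = degenFamily ζ t := by
  rw [act_symm_eq_iff]
  intro x y
  funext m
  simp only [degenEquiv, LinearEquiv.coe_ofInjectiveEndo, degenMap, LinearMap.coe_mk,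
    AddHom.coe_mk, Jzeta_apply, degenFamily, LinearMap.mk₂_apply]
  split_ifs <;> subst_vars <;> simp_all <;> ring

lemma J3_mem_closure_orb_Jzeta_of_ne (ζ : Fin (k + 3) → ℂ) (hζ : ζ 1 ≠ ζ 2) :
    J3 (k + 3) ∈ closure (orb (Jzeta (k + 3) ζ)) := by
  rw [← degenFamily_zero ζ]
  exact mem_closure_orb_of_continuous (continuous_degenFamily ζ)
    fun t ht => ⟨_, act_degenEquiv_symm ζ ht hζ⟩

end Degeneration

theorem Jzeta_degenerates_J3_general (n : ℕ) (hn : 3 ≤ n) (ζ : Fin n → ℂ)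
    (hne : ∃ i j : Fin n, 1 ≤ i.val ∧ 1 ≤ j.val ∧ ζ i ≠ ζ j) :
    J3 n ∈ closure (orb (Jzeta n ζ)) := by
  obtain ⟨k, rfl⟩ := Nat.exists_eq_add_of_le' hn
  obtain ⟨a, b, ha, hb, hab⟩ := hne
  obtain ⟨c, hc0, hc1, hζc⟩ : ∃ c : Fin (k + 3), c ≠ 0 ∧ c ≠ 1 ∧ ζ 1 ≠ ζ c := by
    by_cases ha1 : ζ 1 = ζ a
    · refine ⟨b, fun h => by simp [h] at hb, ?_, by rwa [ha1]⟩
      rintro rfl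
      exact hab ha1.symm
    · refine ⟨a, fun h => by simp [h] at ha, ?_, ha1⟩
      rintro rfl
      exact ha1 rfl
  have hτ0 : Equiv.swap 2 c 0 = 0 := Equiv.swap_apply_of_ne_of_ne fin_two_ne_zero.symm hc0.symm
  refine closure_orb_subset_of_mem_orb (Jzeta_comp_perm_mem_orb ζ _ hτ0)
    (J3_mem_closure_orb_Jzeta_of_ne _ ?_)
  simpa [Equiv.swap_apply_of_ne_of_ne fin_two_ne_one.symm hc1.symm] using hζc

/-- `J(ζ)` with non-constant `ζ` degenerates to `J₃`. -/
theorem Jzeta_degenerates_J3 (n : ℕ) (hn : 3 ≤ n) (ζ : Fin n → ℂ)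
    (hζ : ∀ j : Fin n, 1 ≤ j.val → (ζ j = 0 ∨ ζ j = 1 / 2 ∨ ζ j = 1))
    (hne : ∃ i j : Fin n, 1 ≤ i.val ∧ 1 ≤ j.val ∧ ζ i ≠ ζ j) :
    J3 n ∈ closure (orb (Jzeta n ζ)) :=
  Jzeta_degenerates_J3_general n hn ζ hne
end
end
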